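/- The formal power series s_C(t) = Σ_{i≥0} e_C(π̃/θ^{i+1}) t^i satisfies the τ-difference equation s_C^{(1)}(t) = (t − θ)·s_C(t) as an identity of formal power series in C[[t]]. -/

import Mathlib

/-- The `k`-th Anderson twist of a formal power series: `f^{(k)} = ∑ f_i^{q^k} t^i`. -/
noncomputable def andersonTwist {C : Type*} [Field C] (q k : ℕ) (f : PowerSeries C) :
    PowerSeries C :=
  PowerSeries.mk fun i => (PowerSeries.coeff i) f ^ q ^ k

/-- The Carlitz factorials: `d_0 = 1`, `d_i = [i] d_{i-1}^q` with `[i] = θ^{q^i} - θ`. -/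
noncomputable def carlitzD {C : Type*} [Field C] (q : ℕ) (θ : C) : ℕ → C
  | 0 => 1
  | i + 1 => (θ ^ q ^ (i + 1) - θ) * carlitzD q θ i ^ q

/-!
The functional equation `e_C(θ z) = θ e_C(z) + e_C(z)^q` follows termwise from
`d_{i+1} = [i+1] d_i^q`, since `x ↦ x^q` is additive and continuous. Applied to
`z = π̃/θ^{n+1}` it reads `s_n^q = e_C(π̃/θ^n) - θ s_n`, which is the coefficient of `t^n`
in `s_C^{(1)} = (t - θ) s_C`, with `e_C(π̃) = 0` for `n = 0`.
-/

open Filter Topology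

lemma tsum_pow_expChar_pow {ι R : Type*} [CommSemiring R] [TopologicalSpace R] [ContinuousMul R]
    [T2Space R] (p n : ℕ) [ExpChar R p] {f : ι → R} (hf : Summable f) :
    (∑' i, f i) ^ p ^ n = ∑' i, f i ^ p ^ n :=
  hf.map_tsum (iterateFrobenius R p n) (continuous_pow _)

noncomputable def carlitzExp {C : Type*} [NormedField C] (q : ℕ) (θ z : C) : C :=
  ∑' i : ℕ, z ^ q ^ i / carlitzD q θ i

section Carlitz

variable {C : Type*} [NormedField C] [IsUltrametricDist C] {q : ℕ} {θ : C}

lemma norm_pow_sub_self_of_one_lt (hθ : 1 < ‖θ‖) {n : ℕ} (hn : 1 < n) :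
    ‖θ ^ n - θ‖ = ‖θ‖ ^ n := by
  have hlt : ‖-θ‖ < ‖θ ^ n‖ := by
    rw [norm_neg, norm_pow]
    simpa using pow_lt_pow_right₀ hθ hn
  rw [sub_eq_add_neg, IsUltrametricDist.norm_add_eq_max_of_norm_ne_norm hlt.ne',
    max_eq_left hlt.le, norm_pow]

lemma norm_carlitzD (hq : 1 < q) (hθ : 1 < ‖θ‖) (i : ℕ) :
    ‖carlitzD q θ i‖ = ‖θ‖ ^ (i * q ^ i) := by
  induction i with
  | zero => simp [carlitzD]
  | succ i ih =>
    rw [carlitzD, norm_mul, norm_pow, ih,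
      norm_pow_sub_self_of_one_lt hθ (Nat.one_lt_pow i.add_one_ne_zero hq), ← pow_mul, ← pow_add]
    congr 1
    ring

lemma summable_carlitzExp [CompleteSpace C] (hq : 1 < q) (hθ : 1 < ‖θ‖) (z : C) :
    Summable fun i : ℕ => z ^ q ^ i / carlitzD q θ i := by
  refine NonarchimedeanAddGroup.summable_of_tendsto_cofinite_zero ?_
  rw [Nat.cofinite_eq_atTop, tendsto_zero_iff_norm_tendsto_zero]
  have htop : Tendsto (fun i : ℕ => ‖θ‖ ^ i) atTop atTop := tendsto_pow_atTop_atTop_of_one_lt hθ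
  refine squeeze_zero' (.of_forall fun i => norm_nonneg _) ?_
    (tendsto_const_nhds.div_atTop htop : Tendsto (fun i => ‖z‖ / ‖θ‖ ^ i) atTop (𝓝 0))
  filter_upwards [htop.eventually_ge_atTop ‖z‖] with i hi
  have hx1 : ‖z‖ / ‖θ‖ ^ i ≤ 1 := div_le_one_of_le₀ hi (by positivity)
  calc ‖z ^ q ^ i / carlitzD q θ i‖ = (‖z‖ / ‖θ‖ ^ i) ^ q ^ i := by
        rw [norm_div, norm_pow, norm_carlitzD hq hθ, div_pow, ← pow_mul, mul_comm]
    _ ≤ ‖z‖ / ‖θ‖ ^ i :=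
        pow_le_of_le_one (by positivity) hx1 (pow_ne_zero _ (by omega))

lemma pow_sub_self_mul_div_carlitzD_succ (hq : 1 < q) (hθ : 1 < ‖θ‖) (z : C) (i : ℕ) :
    (θ ^ q ^ (i + 1) - θ) * (z ^ q ^ (i + 1) / carlitzD q θ (i + 1))
      = (z ^ q ^ i / carlitzD q θ i) ^ q := by
  have hbracket : θ ^ q ^ (i + 1) - θ ≠ 0 := norm_ne_zero_iff.mp <| by
    rw [norm_pow_sub_self_of_one_lt hθ (Nat.one_lt_pow i.add_one_ne_zero hq)]
    exact (pow_pos (one_pos.trans hθ) _).ne'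
  rw [carlitzD, div_pow, ← pow_mul, ← pow_succ, ← mul_div_assoc, mul_div_mul_left _ _ hbracket]

lemma carlitzExp_theta_mul [CompleteSpace C] {p e : ℕ} [ExpChar C p] (hq : 1 < p ^ e)
    (hθ : 1 < ‖θ‖) (z : C) :
    carlitzExp (p ^ e) θ (θ * z)
      = θ * carlitzExp (p ^ e) θ z + carlitzExp (p ^ e) θ z ^ p ^ e := by
  have hz := summable_carlitzExp hq hθ z
  have hsum : HasSum (fun i => (θ ^ (p ^ e) ^ i - θ) * (z ^ (p ^ e) ^ i / carlitzD (p ^ e) θ i))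
      (carlitzExp (p ^ e) θ (θ * z) - θ * carlitzExp (p ^ e) θ z) := by
    refine ((summable_carlitzExp hq hθ (θ * z)).hasSum.sub (hz.hasSum.mul_left θ)).congr_fun
      fun i => ?_
    rw [mul_pow]
    ring
  have hshift : carlitzExp (p ^ e) θ (θ * z) - θ * carlitzExp (p ^ e) θ z
      = ∑' i, (z ^ (p ^ e) ^ i / carlitzD (p ^ e) θ i) ^ p ^ e := by
    rw [← hsum.tsum_eq, hsum.summable.tsum_eq_zero_add]
    simp only [pow_zero, pow_one, sub_self, zero_mul, zero_add]
    exact tsum_congr (pow_sub_self_mul_div_carlitzD_succ hq hθ z)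
  have hfrob : carlitzExp (p ^ e) θ z ^ p ^ e
      = ∑' i, (z ^ (p ^ e) ^ i / carlitzD (p ^ e) θ i) ^ p ^ e :=
    tsum_pow_expChar_pow p e hz
  rw [hfrob, ← hshift]
  ring

end Carlitz

theorem carlitz_sC_tau_difference_general
    {C : Type*} [NormedField C] [CompleteSpace C] [IsUltrametricDist C]
    (p e : ℕ) (hp : p.Prime) (he : 0 < e) [CharP C p]
    (q : ℕ) (hq : q = p ^ e)
    (θ : C) (hθ : ‖θ‖ = (q : ℝ))
    (eC : C → C) (heC : ∀ z : C, eC z = ∑' i : ℕ, z ^ q ^ i / carlitzD q θ i)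
    (ϖ : C) (hϖ0 : eC ϖ = 0) :
    andersonTwist q 1 (PowerSeries.mk fun i => eC (ϖ / θ ^ (i + 1)))
      = (PowerSeries.X - PowerSeries.C θ) *
          PowerSeries.mk fun i => eC (ϖ / θ ^ (i + 1)) := by
  have : Fact p.Prime := ⟨hp⟩
  have hq1 : 1 < q := hq ▸ Nat.one_lt_pow he.ne' hp.one_lt
  have hθ1 : 1 < ‖θ‖ := by rw [hθ]; exact_mod_cast hq1
  have hθ0 : θ ≠ 0 := norm_pos_iff.mp (one_pos.trans hθ1)
  obtain rfl : eC = carlitzExp q θ := funext heC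
  have hcoeff (n : ℕ) : carlitzExp q θ (ϖ / θ ^ (n + 1)) ^ q
      = carlitzExp q θ (ϖ / θ ^ n) - θ * carlitzExp q θ (ϖ / θ ^ (n + 1)) := by
    have hz : θ * (ϖ / θ ^ (n + 1)) = ϖ / θ ^ n := by
      rw [pow_succ', ← mul_div_assoc, mul_div_mul_left _ _ hθ0]
    have hfeq := carlitzExp_theta_mul (hq ▸ hq1) hθ1 (ϖ / θ ^ (n + 1))
    rw [← hq, hz] at hfeq
    linear_combination -hfeq
  ext n
  rcases n with _ | n
  · simpa [andersonTwist, sub_mul, hϖ0] using hcoeff 0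
  · simp [andersonTwist, sub_mul, PowerSeries.coeff_succ_X_mul, hcoeff (n + 1)]

/-- The series `s_C(t) = ∑ e_C(π̃/θ^{i+1}) t^i` satisfies the τ-difference equation
`s_C^{(1)}(t) = (t - θ) s_C(t)` in `C[[t]]`. -/
theorem carlitz_sC_tau_difference
    {C : Type*} [NormedField C] [CompleteSpace C] [IsAlgClosed C] [IsUltrametricDist C]
    (p e : ℕ) (hp : p.Prime) (he : 0 < e) [CharP C p]
    (q : ℕ) (hq : q = p ^ e)
    (θ : C) (hθ : ‖θ‖ = (q : ℝ))
    (eC : C → C) (heC : ∀ z : C, eC z = ∑' i : ℕ, z ^ q ^ i / carlitzD q θ i)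
    (ϖ : C) (hϖ : ϖ ≠ 0) (hϖ0 : eC ϖ = 0) :
    andersonTwist q 1 (PowerSeries.mk fun i => eC (ϖ / θ ^ (i + 1)))
      = (PowerSeries.X - PowerSeries.C θ) *
          PowerSeries.mk fun i => eC (ϖ / θ ^ (i + 1)) :=
  carlitz_sC_tau_difference_general p e hp he q hq θ hθ eC heC ϖ hϖ0
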